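/- arXiv:1904.04753 — 4 statements merged into one kernel-verified Lean document; each statement's English description precedes it below -/
import Mathlib

section
/- Let v_1, …, v_k (k ≥ 2, vertices distinct) be a directed cycle in G*, i.e., (v_1,v_2), …, (v_{k−1},v_k), (v_k,v_1) are all directed edges of G*. If the vertex set T = {v_1,…,v_k} is an independent set of G*_u, then either T = {2,7,10} or T = {3,6,11}. -/
/-- The want sets `W₁, W₂, W₃` of the three receivers. -/
def Wset : Fin 3 → Finset ℕ
  | 0 => {1, 2, 3, 4}
  | 1 => {5, 6, 7, 8}
  | 2 => {9, 10, 11, 12}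

/-- The side information sets `K₁, K₂, K₃` of the three receivers. -/
def Kset : Fin 3 → Finset ℕ
  | 0 => {5, 6, 9, 10}
  | 1 => {1, 2, 9, 11}
  | 2 => {1, 3, 5, 7}

/-- Directed edge relation of the side information graph `G*` on `{1, …, 12}`:
`(a, b)` is an edge iff `a ∈ Wᵢ` and `b ∈ Kᵢ` for the (unique) `i` with `a ∈ Wᵢ`. -/
def Gedge (a b : ℕ) : Prop := ∃ i : Fin 3, a ∈ Wset i ∧ b ∈ Kset i

/-- The underlying undirected side information graph `G*ᵤ`: distinct `a, b` are adjacent iff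
both `(a, b)` and `(b, a)` are directed edges of `G*`. -/
def Gu : SimpleGraph ℕ where
  Adj a b := a ≠ b ∧ Gedge a b ∧ Gedge b a
  symm := by
    constructor
    intro a b h
    exact ⟨h.1.symm, h.2.2, h.2.1⟩
  loopless := by
    constructor
    intro a h
    exact h.1 rfl

/-! Each of `1, 5, 9` is joined in `G*ᵤ` to all of its out-neighbours, and every vertex of a
cycle has an in-neighbour, so an independent cycle lives on `(K₁ ∪ K₂ ∪ K₃) \ {1, 5, 9}`, which is
`{2, 3, 6, 7, 10, 11}`. There each vertex has exactly one out-neighbour it is not joined to in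
`G*ᵤ`, so the cycle follows the permutation `(2 10 7)(3 6 11)` and is one of its orbits. -/

instance : DecidableRel Gedge := fun a b =>
  inferInstanceAs (Decidable (∃ i : Fin 3, a ∈ Wset i ∧ b ∈ Kset i))

instance : DecidableRel Gu.Adj := fun a b =>
  inferInstanceAs (Decidable (a ≠ b ∧ Gedge a b ∧ Gedge b a))

theorem Fin.image_univ_eq_orbit_of_period_three {α : Type*} [DecidableEq α] {n : ℕ}
    (v : Fin (n + 1) → α) (f : α → α) (hv : ∀ i, v (i + 1) = f (v i))
    (hf : f (f (f (v 0))) = v 0) :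
    Finset.univ.image v = {v 0, f (v 0), f (f (v 0))} := by
  set O : Finset α := {v 0, f (v 0), f (f (v 0))}
  have hO : ∀ x ∈ O, f x ∈ O := by
    simp only [O, Finset.mem_insert, Finset.mem_singleton]
    rintro x (rfl | rfl | rfl) <;> simp [hf]
  have hvO : ∀ i, v i ∈ O := by
    intro i
    induction i using Fin.induction with
    | zero => simp [O]
    | succ i ih => simpa [← Fin.coeSucc_eq_succ, hv] using hO _ ih
  refine Finset.Subset.antisymm (Finset.image_subset_iff.2 fun i _ => hvO i) ?_
  have hmem : ∀ i, v i ∈ Finset.univ.image v := fun i =>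
    Finset.mem_image_of_mem v (Finset.mem_univ i)
  simp only [O, ← hv, Finset.insert_subset_iff, Finset.singleton_subset_iff]
  exact ⟨hmem _, hmem _, hmem _⟩

theorem Gedge.mem_biUnion_Kset {a b : ℕ} (h : Gedge a b) : b ∈ Finset.univ.biUnion Kset := by
  obtain ⟨i, -, hb⟩ := h
  exact Finset.mem_biUnion.2 ⟨i, Finset.mem_univ _, hb⟩

theorem Gu.adj_of_gedge_of_mem {a b : ℕ} (ha : a ∈ ({1, 5, 9} : Finset ℕ)) (h : Gedge a b) :
    Gu.Adj a b := by
  have key : ∀ a ∈ ({1, 5, 9} : Finset ℕ), ∀ b ∈ Finset.univ.biUnion Kset,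
      Gedge a b → Gu.Adj a b := by decide
  exact key a ha b h.mem_biUnion_Kset h

def independentCycleVertices : Finset ℕ := {2, 3, 6, 7, 10, 11}

def independentSucc : ℕ → ℕ
  | 2 => 10
  | 10 => 7
  | 7 => 2
  | 3 => 6
  | 6 => 11
  | 11 => 3
  | n => n

theorem mem_independentCycleVertices {a b c : ℕ} (hab : Gedge a b) (hbc : Gedge b c)
    (hind : ¬ Gu.Adj b c) : b ∈ independentCycleVertices := by
  have key : Finset.univ.biUnion Kset \ {1, 5, 9} = independentCycleVertices := by decide
  rw [← key, Finset.mem_sdiff]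
  exact ⟨hab.mem_biUnion_Kset, fun hb => hind (Gu.adj_of_gedge_of_mem hb hbc)⟩

theorem eq_independentSucc {a b : ℕ} (ha : a ∈ independentCycleVertices)
    (hb : b ∈ independentCycleVertices) (hab : Gedge a b) (hind : ¬ Gu.Adj a b) :
    b = independentSucc a := by
  have key : ∀ a ∈ independentCycleVertices, ∀ b ∈ independentCycleVertices,
      Gedge a b → ¬ Gu.Adj a b → b = independentSucc a := by decide
  exact key a ha b hb hab hind

theorem independentSucc_period_three {a : ℕ} (ha : a ∈ independentCycleVertices) :
    independentSucc (independentSucc (independentSucc a)) = a := by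
  revert a; decide

theorem orbit_independentSucc {a : ℕ} (ha : a ∈ independentCycleVertices) :
    ({a, independentSucc a, independentSucc (independentSucc a)} : Finset ℕ) = {2, 7, 10} ∨
      ({a, independentSucc a, independentSucc (independentSucc a)} : Finset ℕ) = {3, 6, 11} := by
  revert a; decide

theorem directed_cycle_independent_in_Gu_general (k : ℕ) (v : Fin (k + 2) → ℕ)
    (hcyc : ∀ i, Gedge (v i) (v (i + 1)))
    (hindep : ∀ a ∈ Finset.image v Finset.univ, ∀ b ∈ Finset.image v Finset.univ,
      ¬ Gu.Adj a b) :
    Finset.image v Finset.univ = ({2, 7, 10} : Finset ℕ) ∨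
      Finset.image v Finset.univ = ({3, 6, 11} : Finset ℕ) := by
  have hind : ∀ i, ¬ Gu.Adj (v i) (v (i + 1)) := fun i =>
    hindep _ (Finset.mem_image_of_mem v (Finset.mem_univ _)) _
      (Finset.mem_image_of_mem v (Finset.mem_univ _))
  have hmem : ∀ i, v i ∈ independentCycleVertices := fun i =>
    mem_independentCycleVertices (a := v (i - 1)) (by simpa using hcyc (i - 1)) (hcyc i) (hind i)
  have hsucc : ∀ i, v (i + 1) = independentSucc (v i) := fun i =>
    eq_independentSucc (hmem i) (hmem (i + 1)) (hcyc i) (hind i)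
  rw [Fin.image_univ_eq_orbit_of_period_three v _ hsucc (independentSucc_period_three (hmem 0))]
  exact orbit_independentSucc (hmem 0)

/-- If the vertex set `T` of a directed cycle `v 0, v 1, …` (of length `k + 2 ≥ 2`, vertices
distinct) in `G*` is an independent set of `G*ᵤ`, then `T = {2, 7, 10}` or `T = {3, 6, 11}`. -/
theorem directed_cycle_independent_in_Gu (k : ℕ) (v : Fin (k + 2) → ℕ)
    (hinj : Function.Injective v)
    (hcyc : ∀ i, Gedge (v i) (v (i + 1)))
    (hindep : ∀ a ∈ Finset.image v Finset.univ, ∀ b ∈ Finset.image v Finset.univ,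
      ¬ Gu.Adj a b) :
    Finset.image v Finset.univ = ({2, 7, 10} : Finset ℕ) ∨
      Finset.image v Finset.univ = ({3, 6, 11} : Finset ℕ) :=
  directed_cycle_independent_in_Gu_general k v hcyc hindep
end

section
/- For any S ⊆ {1,…,12}, let I = {4,8,12} ∩ S. Then MAIS(G*_S) < α(G*_{S,u}) if and only if S = {2,7,10} ∪ I or S = {3,6,11} ∪ I, where G*_S is the subgraph of G* induced by S and G*_{S,u} is the subgraph of G*_u induced by S. -/
/-- A directed cycle (of length `k + 2 ≥ 2`) with all its vertices in the finite set `S`,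
in the directed graph with edge relation `E`: a sequence of distinct vertices
`v 0, v 1, …` with a directed edge from each vertex to the (cyclically) next one. -/
def HasDirCycleIn (E : ℕ → ℕ → Prop) (S : Finset ℕ) : Prop :=
  ∃ k : ℕ, ∃ v : Fin (k + 2) → ℕ,
    Function.Injective v ∧ (∀ i, v i ∈ S) ∧ ∀ i, E (v i) (v (i + 1))

/-- `MAIS` of the subgraph induced by `S` of the directed graph with edge relation `E`:
the maximum cardinality of a subset `T ⊆ S` whose induced subgraph contains no directed
cycle. -/
noncomputable def maisOn (E : ℕ → ℕ → Prop) (S : Finset ℕ) : ℕ :=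
  sSup {n : ℕ | ∃ T : Finset ℕ, T ⊆ S ∧ T.card = n ∧ ¬ HasDirCycleIn E T}

/-- The independence number of the subgraph of `G` induced by the finite vertex set `S`:
the maximum cardinality of a set `T ⊆ S` of pairwise non-adjacent vertices. -/
noncomputable def alphaOn (G : SimpleGraph ℕ) (S : Finset ℕ) : ℕ :=
  sSup {n : ℕ | ∃ T : Finset ℕ, T ⊆ S ∧ T.card = n ∧ ∀ a ∈ T, ∀ b ∈ T, ¬ G.Adj a b}

/-!
The vertices `4`, `8`, `12` lie in no `Kᵢ`, so they have no in-edges: they lie on no directed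
cycle and are isolated in `G*ᵤ`. Each of them in `S` therefore adds one to both `MAIS` and `α`,
and it suffices to treat `S ⊆ {1,2,3,5,6,7,9,10,11}`. There a finite check shows that every
independent set of `G*ᵤ` is acyclic, except the two directed triangles `2 → 10 → 7 → 2` and
`3 → 6 → 11 → 3`. If a maximum independent set of `S` is such a triangle `A`, then either
`S = A`, where `MAIS = 2 < 3 = α`, or `S` has a further vertex `z` and three vertices of
`A ∪ {z}` are acyclic, so `MAIS ≥ 3 = α`.
-/

open Finset

section MaxCard

variable {P : Finset ℕ → Prop} {S T F : Finset ℕ}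

noncomputable def maxCardOn (P : Finset ℕ → Prop) (S : Finset ℕ) : ℕ :=
  sSup {n : ℕ | ∃ T : Finset ℕ, T ⊆ S ∧ T.card = n ∧ P T}

lemma bddAbove_card_subsets (P : Finset ℕ → Prop) (S : Finset ℕ) :
    BddAbove {n : ℕ | ∃ T : Finset ℕ, T ⊆ S ∧ T.card = n ∧ P T} :=
  ⟨S.card, by rintro n ⟨T, hT, rfl, -⟩; exact card_le_card hT⟩

lemma card_le_maxCardOn (hT : T ⊆ S) (hP : P T) : T.card ≤ maxCardOn P S :=
  le_csSup (bddAbove_card_subsets P S) ⟨T, hT, rfl, hP⟩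

lemma maxCardOn_le {n : ℕ} (h : ∀ T ⊆ S, P T → T.card ≤ n) : maxCardOn P S ≤ n :=
  csSup_le' <| by rintro m ⟨T, hT, rfl, hP⟩; exact h T hT hP

lemma exists_card_eq_maxCardOn (h0 : P ∅) : ∃ T ⊆ S, T.card = maxCardOn P S ∧ P T :=
  Nat.sSup_mem (s := {n : ℕ | ∃ T : Finset ℕ, T ⊆ S ∧ T.card = n ∧ P T})
    ⟨0, ∅, empty_subset S, card_empty, h0⟩ (bddAbove_card_subsets P S)

lemma maxCardOn_eq_sdiff_add (h0 : P ∅) (hP : ∀ T, P (T \ F) ↔ P T) :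
    maxCardOn P S = maxCardOn P (S \ F) + (F ∩ S).card := by
  apply le_antisymm
  · refine maxCardOn_le fun T hT hPT => ?_
    calc T.card = (T \ F).card + (F ∩ T).card := by rw [inter_comm, card_sdiff_add_card_inter]
      _ ≤ maxCardOn P (S \ F) + (F ∩ S).card :=
        add_le_add (card_le_maxCardOn (sdiff_subset_sdiff hT le_rfl) ((hP T).2 hPT))
          (card_le_card (inter_subset_inter_left hT))
  · obtain ⟨T, hT, hcard, hPT⟩ := exists_card_eq_maxCardOn (S := S \ F) h0
    have hdisj : Disjoint T (F ∩ S) :=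
      disjoint_of_subset_left hT (disjoint_sdiff_self_left.mono_right inter_subset_left)
    have hsdiff : (T ∪ F ∩ S) \ F = T := by
      rw [union_sdiff_distrib, sdiff_eq_empty_iff_subset.2 inter_subset_left, union_empty,
        sdiff_eq_self_of_disjoint (disjoint_of_subset_left hT disjoint_sdiff_self_left)]
    rw [← hcard, ← card_union_of_disjoint hdisj]
    exact card_le_maxCardOn (union_subset (hT.trans sdiff_subset) inter_subset_right)
      ((hP _).1 (by rwa [hsdiff]))

end MaxCard

section Cycles

variable {E : ℕ → ℕ → Prop} {S T F : Finset ℕ}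

lemma HasDirCycleIn.mono (h : HasDirCycleIn E S) (hST : S ⊆ T) : HasDirCycleIn E T :=
  let ⟨k, v, hinj, hmem, hedge⟩ := h
  ⟨k, v, hinj, fun i => hST (hmem i), hedge⟩

lemma not_hasDirCycleIn_empty : ¬HasDirCycleIn E ∅ :=
  fun ⟨_, _, _, hmem, _⟩ => notMem_empty _ (hmem 0)

def EverySubsetHasSource (E : ℕ → ℕ → Prop) (T : Finset ℕ) : Prop :=
  ∀ U ⊆ T, U.Nonempty → ∃ x ∈ U, ∀ y ∈ U, ¬E y x

instance (E : ℕ → ℕ → Prop) [DecidableRel E] (T : Finset ℕ) :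
    Decidable (EverySubsetHasSource E T) := by
  unfold EverySubsetHasSource; infer_instance

lemma EverySubsetHasSource.not_hasDirCycleIn (h : EverySubsetHasSource E T) :
    ¬HasDirCycleIn E T := by
  -- the vertex set of a cycle has no source: each `v i` is entered from `v (i - 1)`
  rintro ⟨k, v, -, hmem, hedge⟩
  obtain ⟨_, hx, hsource⟩ := h (univ.image v) (by simpa [subset_iff] using hmem)
    (univ_nonempty.image v)
  obtain ⟨i, -, rfl⟩ := mem_image.1 hx
  exact hsource (v (i - 1)) (mem_image_of_mem v (mem_univ _)) (by simpa using hedge (i - 1))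

lemma hasDirCycleIn_sdiff_iff (hF : ∀ x ∈ F, ∀ y, ¬E y x) :
    HasDirCycleIn E (T \ F) ↔ HasDirCycleIn E T := by
  refine ⟨fun h => h.mono sdiff_subset, fun ⟨k, v, hinj, hmem, hedge⟩ => ?_⟩
  refine ⟨k, v, hinj, fun i => mem_sdiff.2 ⟨hmem i, fun hF' => ?_⟩, hedge⟩
  exact hF _ hF' (v (i - 1)) (by simpa using hedge (i - 1))

lemma maisOn_lt_card (h : HasDirCycleIn E S) : maisOn E S < S.card := by
  have hpos : 0 < S.card := by
    obtain ⟨k, v, -, hmem, -⟩ := h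
    exact card_pos.2 ⟨v 0, hmem 0⟩
  suffices maisOn E S ≤ S.card - 1 by omega
  refine maxCardOn_le fun T hT hT' => Nat.le_sub_one_of_lt (card_lt_card ?_)
  exact hT.ssubset_of_ne (by rintro rfl; exact hT' h)

lemma maisOn_eq_sdiff_add (hF : ∀ x ∈ F, ∀ y, ¬E y x) :
    maisOn E S = maisOn E (S \ F) + (F ∩ S).card :=
  maxCardOn_eq_sdiff_add not_hasDirCycleIn_empty fun _ => not_congr (hasDirCycleIn_sdiff_iff hF)

end Cycles

section Independence

variable {G : SimpleGraph ℕ} {S F : Finset ℕ}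

lemma alphaOn_eq_sdiff_add (hF : ∀ x ∈ F, ∀ y, ¬G.Adj y x) :
    alphaOn G S = alphaOn G (S \ F) + (F ∩ S).card := by
  refine maxCardOn_eq_sdiff_add (by simp) fun T => ⟨fun h a ha b hb hab => ?_, ?_⟩
  · by_cases haF : a ∈ F
    · exact hF a haF b hab.symm
    by_cases hbF : b ∈ F
    · exact hF b hbF a hab
    exact h a (mem_sdiff.2 ⟨ha, haF⟩) b (mem_sdiff.2 ⟨hb, hbF⟩) hab
  · exact fun h a ha b hb => h a (mem_sdiff.1 ha).1 b (mem_sdiff.1 hb).1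

end Independence

instance inst_s6 : DecidableRel Gedge := fun a b => by unfold Gedge; infer_instance

instance inst_s6_2 : DecidableRel Gu.Adj := fun a b => by
  change Decidable (a ≠ b ∧ Gedge a b ∧ Gedge b a); infer_instance

def triangles : Finset (Finset ℕ) := {{2, 7, 10}, {3, 6, 11}}

def core : Finset ℕ := Icc 1 12 \ {4, 8, 12}

lemma not_gedge_of_mem_sources : ∀ x ∈ ({4, 8, 12} : Finset ℕ), ∀ y, ¬Gedge y x := by
  rintro x hx y ⟨i, -, hi⟩
  revert i x
  decide

lemma independent_of_mem_triangles :
    ∀ A ∈ triangles, ∀ a ∈ A, ∀ b ∈ A, ¬Gu.Adj a b := by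
  decide

lemma hasDirCycleIn_of_mem_triangles {A : Finset ℕ} (hA : A ∈ triangles) :
    HasDirCycleIn Gedge A := by
  simp only [triangles, mem_insert, mem_singleton] at hA
  rcases hA with rfl | rfl
  · exact ⟨1, ![2, 10, 7], by decide, by decide, by decide⟩
  · exact ⟨1, ![3, 6, 11], by decide, by decide, by decide⟩

set_option maxRecDepth 10000 in
lemma mem_triangles_or_everySubsetHasSource_of_independent :
    ∀ T ⊆ core, (∀ a ∈ T, ∀ b ∈ T, ¬Gu.Adj a b) →
      T ∈ triangles ∨ EverySubsetHasSource Gedge T := by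
  decide

lemma exists_everySubsetHasSource_of_mem_triangles :
    ∀ A ∈ triangles, ∀ z ∈ core \ A,
      ∃ T ⊆ insert z A, T.card = A.card ∧ EverySubsetHasSource Gedge T := by
  decide

theorem maisOn_lt_alphaOn_iff_mem_triangles {S : Finset ℕ} (hS : S ⊆ core) :
    maisOn Gedge S < alphaOn Gu S ↔ S ∈ triangles := by
  refine ⟨fun hlt => ?_, fun hmem => ?_⟩
  · by_contra hnot
    obtain ⟨T, hTS, hTcard, hT⟩ :
        ∃ T ⊆ S, T.card = alphaOn Gu S ∧ ∀ a ∈ T, ∀ b ∈ T, ¬Gu.Adj a b :=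
      exists_card_eq_maxCardOn (by simp)
    refine hlt.not_ge (hTcard ▸ ?_)
    rcases mem_triangles_or_everySubsetHasSource_of_independent T (hTS.trans hS) hT with
      hA | hacyc
    · obtain ⟨z, hzS, hzT⟩ :=
        exists_of_ssubset (hTS.ssubset_of_ne (by rintro rfl; exact hnot hA))
      obtain ⟨T', hT', hcard, hacyc⟩ := exists_everySubsetHasSource_of_mem_triangles T hA z
        (mem_sdiff.2 ⟨hS hzS, hzT⟩)
      exact hcard ▸
        card_le_maxCardOn (hT'.trans (insert_subset hzS hTS)) hacyc.not_hasDirCycleIn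
    · exact card_le_maxCardOn hTS hacyc.not_hasDirCycleIn
  · exact (maisOn_lt_card (hasDirCycleIn_of_mem_triangles hmem)).trans_le
      (card_le_maxCardOn subset_rfl (independent_of_mem_triangles S hmem))

lemma sdiff_eq_iff_eq_union_inter {α : Type*} [DecidableEq α] {S A F : Finset α}
    (h : Disjoint A F) :
    S \ F = A ↔ S = A ∪ F ∩ S := by
  constructor
  · rintro rfl
    rw [inter_comm, sdiff_union_inter]
  · rintro hS
    rw [hS, union_sdiff_distrib, sdiff_eq_self_of_disjoint h,
      sdiff_eq_empty_iff_subset.2 inter_subset_left, union_empty]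

theorem mais_lt_alpha_iff (S : Finset ℕ) (hS : S ⊆ Finset.Icc 1 12) :
    maisOn Gedge S < alphaOn Gu S ↔
      (S = {2, 7, 10} ∪ (({4, 8, 12} : Finset ℕ) ∩ S) ∨
        S = {3, 6, 11} ∪ (({4, 8, 12} : Finset ℕ) ∩ S)) := by
  rw [maisOn_eq_sdiff_add not_gedge_of_mem_sources,
    alphaOn_eq_sdiff_add (G := Gu) fun x hx y hxy => not_gedge_of_mem_sources x hx y hxy.2.1,
    add_lt_add_iff_right, maisOn_lt_alphaOn_iff_mem_triangles (sdiff_subset_sdiff hS le_rfl),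
    ← sdiff_eq_iff_eq_union_inter (by decide), ← sdiff_eq_iff_eq_union_inter (by decide)]
  simp only [triangles, mem_insert, mem_singleton]
end

section
/- If S ⊆ {1,…,12} is such that MAIS(G*_S) < α(G*_{S,u}), then S is an independent set of G*_u, and consequently the clique cover number of G*_{S,u} equals |S|. -/
/-- The clique cover number of the subgraph of `G` induced by the finite vertex set `S`:
the minimum number of cliques (contained in `S`) needed to cover all vertices of `S`. -/
noncomputable def cliqueCoverOn (G : SimpleGraph ℕ) (S : Finset ℕ) : ℕ :=
  sInf {n : ℕ | ∃ C : Fin n → Finset ℕ,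
    (∀ i, ↑(C i) ⊆ (S : Set ℕ) ∧ G.IsClique (C i)) ∧ ∀ v ∈ S, ∃ i, v ∈ C i}

/-
In a `G*ᵤ`-independent set only the one-way edges of `G*` survive, and the only directed cycles
they form are the triangles `2 → 10 → 7 → 2` and `3 → 6 → 11 → 3`. Let `T ⊆ S` be a maximum
independent set. If `T` is acyclic, `α ≤ MAIS`. Otherwise `T` contains one of the triangles `Δ`,
and if `S` contained an edge `ab` of `G*ᵤ`, one of its ends `x` is a `G*ᵤ`-neighbour of some
`r ∈ Δ` while all other out-neighbours of `x` are `G*ᵤ`-neighbours of `Δ`, hence outside `T`.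
Then `x` is a sink of `(T \ {r}) ∪ {x}`, which is therefore acyclic of size `|T|`, and again
`α ≤ MAIS`. So `S` is independent, and its cliques are singletons.
-/

section General

variable {E : ℕ → ℕ → Prop} {G : SimpleGraph ℕ} {S T U : Finset ℕ} {x r : ℕ}

lemma card_le_maisOn (hTS : T ⊆ S) (hT : ¬ HasDirCycleIn E T) : T.card ≤ maisOn E S :=
  le_csSup ⟨S.card, by rintro n ⟨U, hU, rfl, -⟩; exact Finset.card_le_card hU⟩ ⟨T, hTS, rfl, hT⟩

lemma exists_card_eq_alphaOn (G : SimpleGraph ℕ) (S : Finset ℕ) :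
    ∃ T ⊆ S, T.card = alphaOn G S ∧ ∀ a ∈ T, ∀ b ∈ T, ¬ G.Adj a b :=
  Nat.sSup_mem (s := {n : ℕ | ∃ T : Finset ℕ, T ⊆ S ∧ T.card = n ∧ ∀ a ∈ T, ∀ b ∈ T, ¬ G.Adj a b})
    ⟨0, ∅, by simp⟩ ⟨S.card, by rintro n ⟨T, hT, rfl, -⟩; exact Finset.card_le_card hT⟩

lemma cliqueCoverOn_eq_card (hS : ∀ a ∈ S, ∀ b ∈ S, ¬ G.Adj a b) :
    cliqueCoverOn G S = S.card := by
  have hsingletons : S.card ∈ {n : ℕ | ∃ C : Fin n → Finset ℕ,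
      (∀ i, ↑(C i) ⊆ (S : Set ℕ) ∧ G.IsClique (C i)) ∧ ∀ v ∈ S, ∃ i, v ∈ C i} := by
    refine ⟨fun i => {(S.equivFin.symm i : ℕ)}, fun i => ⟨?_, by simp⟩, fun v hv => ?_⟩
    · simp
    · exact ⟨S.equivFin ⟨v, hv⟩, by simp⟩
  refine le_antisymm (Nat.sInf_le hsingletons) ?_
  obtain ⟨C, hC, hcov⟩ := Nat.sInf_mem ⟨_, hsingletons⟩
  have hcard_le_one : ∀ i, (C i).card ≤ 1 := fun i =>
    Finset.card_le_one.2 fun p hp q hq => by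
      by_contra hne
      exact hS p ((hC i).1 hp) q ((hC i).1 hq) ((hC i).2 hp hq hne)
  calc S.card ≤ (Finset.univ.biUnion C).card :=
        Finset.card_le_card fun v hv => by simpa using hcov v hv
    _ ≤ ∑ i, (C i).card := Finset.card_biUnion_le
    _ ≤ ∑ _i : Fin (cliqueCoverOn G S), 1 := Finset.sum_le_sum fun i _ => hcard_le_one i
    _ = cliqueCoverOn G S := by simp

lemma not_hasDirCycleIn_insert (hU : ¬ HasDirCycleIn E U) (hx : ∀ y ∈ insert x U, ¬ E x y) :
    ¬ HasDirCycleIn E (insert x U) := by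
  rintro ⟨k, v, hinj, hmem, hedge⟩
  by_cases hxv : ∃ i, v i = x
  · obtain ⟨i, rfl⟩ := hxv
    exact hx _ (hmem (i + 1)) (hedge i)
  · exact hU ⟨k, v, hinj,
      fun i => (Finset.mem_insert.1 (hmem i)).resolve_left fun h => hxv ⟨i, h⟩, hedge⟩

lemma card_le_maisOn_of_exchange (hTS : T ⊆ S) (hxS : x ∈ S) (hxT : x ∉ T) (hrT : r ∈ T)
    (hacyc : ¬ HasDirCycleIn E (T.erase r)) (hx : ∀ y ∈ insert x (T.erase r), ¬ E x y) :
    T.card ≤ maisOn E S := by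
  have hcard : (insert x (T.erase r)).card = T.card := by
    rw [Finset.card_insert_of_notMem fun h => hxT (Finset.mem_of_mem_erase h),
      Finset.card_erase_add_one hrT]
  rw [← hcard]
  exact card_le_maisOn (Finset.insert_subset hxS ((Finset.erase_subset r T).trans hTS))
    (not_hasDirCycleIn_insert hacyc hx)

end General

def OneWay (a b : ℕ) : Prop := Gedge a b ∧ ¬ Gedge b a

instance : DecidableRel OneWay := fun a b =>
  inferInstanceAs (Decidable (Gedge a b ∧ ¬ Gedge b a))

def gstarTriangles : Finset (Finset ℕ) := {{2, 7, 10}, {3, 6, 11}}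

lemma Gedge.mem_Icc {a b : ℕ} (h : Gedge a b) : a ∈ Finset.Icc 1 12 ∧ b ∈ Finset.Icc 1 12 := by
  obtain ⟨i, ha, hb⟩ := h
  fin_cases i <;> simp [Wset, Kset] at ha hb ⊢ <;> omega

lemma Gedge.irrefl (a : ℕ) : ¬ Gedge a a := by
  rintro ⟨i, ha, hb⟩
  fin_cases i <;> simp [Wset, Kset] at ha hb <;> omega

lemma oneWay_of_not_adj {a b : ℕ} (hab : Gedge a b) (hn : ¬ Gu.Adj a b) : OneWay a b :=
  ⟨hab, fun hba => hn ⟨fun h => Gedge.irrefl a (h ▸ hab), hab, hba⟩⟩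

/- No one-way edge enters 4, 8, 12 or leaves 1, 5, 9, so the three inner vertices of a one-way path
of length four lie among the other six, where the one-way edges form just the two triangles. -/
lemma mem_gstarTriangles_of_oneWay_path : ∀ a ∈ Finset.Icc 1 12, ∀ b ∈ Finset.Icc 1 12,
    OneWay a b → ∀ c ∈ Finset.Icc 1 12, OneWay b c → ∀ d ∈ Finset.Icc 1 12, OneWay c d →
    ∀ e ∈ Finset.Icc 1 12, OneWay d e → {b, c, d} ∈ gstarTriangles := by
  decide

lemma exists_exchange_of_adj : ∀ Δ ∈ gstarTriangles, ∀ a ∈ Finset.Icc 1 12,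
    ∀ b ∈ Finset.Icc 1 12, Gu.Adj a b → ∃ x ∈ ({a, b} : Finset ℕ), ∃ r ∈ Δ, Gu.Adj x r ∧
      ∀ y ∈ Finset.Icc 1 12, y ≠ r → Gedge x y → ∃ z ∈ Δ, Gu.Adj y z := by
  decide

lemma exists_adj_of_mem_gstarTriangles : ∀ Δ ∈ gstarTriangles, ∀ Δ' ∈ gstarTriangles, Δ ≠ Δ' →
    ∃ p ∈ Δ, ∃ q ∈ Δ', Gu.Adj p q := by
  decide

section Gstar

variable {S T : Finset ℕ}

lemma exists_gstarTriangle_subset (hT : ∀ a ∈ T, ∀ b ∈ T, ¬ Gu.Adj a b)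
    (hc : HasDirCycleIn Gedge T) : ∃ Δ ∈ gstarTriangles, Δ ⊆ T := by
  obtain ⟨k, v, -, hmem, hedge⟩ := hc
  have hV : ∀ i, v i ∈ Finset.Icc 1 12 := fun i => (hedge i).mem_Icc.1
  have hstep : ∀ i, OneWay (v i) (v (i + 1)) := fun i =>
    oneWay_of_not_adj (hedge i) (hT _ (hmem i) _ (hmem (i + 1)))
  refine ⟨{v 1, v (1 + 1), v (1 + 1 + 1)}, ?_, ?_⟩
  · exact mem_gstarTriangles_of_oneWay_path _ (hV 0) _ (hV 1) (by simpa using hstep 0)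
      _ (hV _) (hstep 1) _ (hV _) (hstep _) _ (hV _) (hstep _)
  · simp [Finset.insert_subset_iff, hmem]

lemma card_le_maisOn_of_hasDirCycleIn (hTS : T ⊆ S) (hT : ∀ a ∈ T, ∀ b ∈ T, ¬ Gu.Adj a b)
    (hc : HasDirCycleIn Gedge T) {a b : ℕ} (ha : a ∈ S) (hb : b ∈ S) (hab : Gu.Adj a b) :
    T.card ≤ maisOn Gedge S := by
  obtain ⟨Δ, hΔ, hΔT⟩ := exists_gstarTriangle_subset hT hc
  obtain ⟨x, hx, r, hr, hxr, hout⟩ :=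
    exists_exchange_of_adj Δ hΔ a hab.2.1.mem_Icc.1 b hab.2.1.mem_Icc.2 hab
  have hxS : x ∈ S := by
    rcases Finset.mem_insert.1 hx with rfl | hx
    · exact ha
    · exact Finset.mem_singleton.1 hx ▸ hb
  refine card_le_maisOn_of_exchange hTS hxS (fun hxT => hT x hxT r (hΔT hr) hxr) (hΔT hr) ?_ ?_
  · intro hc'
    obtain ⟨Δ', hΔ', hΔ'T⟩ := exists_gstarTriangle_subset
      (fun p hp q hq => hT p (Finset.mem_of_mem_erase hp) q (Finset.mem_of_mem_erase hq)) hc'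
    by_cases hΔΔ' : Δ = Δ'
    · exact Finset.notMem_erase r T (hΔ'T (hΔΔ' ▸ hr))
    · obtain ⟨p, hp, q, hq, hpq⟩ := exists_adj_of_mem_gstarTriangles Δ hΔ Δ' hΔ' hΔΔ'
      exact hT p (hΔT hp) q (Finset.mem_of_mem_erase (hΔ'T hq)) hpq
  · intro y hy hxy
    rcases Finset.mem_insert.1 hy with rfl | hy
    · exact Gedge.irrefl y hxy
    · obtain ⟨z, hz, hyz⟩ := hout y hxy.mem_Icc.2 (Finset.ne_of_mem_erase hy) hxy
      exact hT y (Finset.mem_of_mem_erase hy) z (hΔT hz) hyz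

end Gstar

theorem mais_lt_alpha_implies_independent_general (S : Finset ℕ)
    (h : maisOn Gedge S < alphaOn Gu S) :
    (∀ a ∈ S, ∀ b ∈ S, ¬ Gu.Adj a b) ∧ cliqueCoverOn Gu S = S.card := by
  have hindep : ∀ a ∈ S, ∀ b ∈ S, ¬ Gu.Adj a b := by
    intro a ha b hb hab
    obtain ⟨T, hTS, hTcard, hT⟩ := exists_card_eq_alphaOn Gu S
    refine h.not_ge (hTcard ▸ ?_)
    by_cases hc : HasDirCycleIn Gedge T
    · exact card_le_maisOn_of_hasDirCycleIn hTS hT hc ha hb hab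
    · exact card_le_maisOn hTS hc
  exact ⟨hindep, cliqueCoverOn_eq_card hindep⟩

theorem mais_lt_alpha_implies_independent (S : Finset ℕ) (hS : S ⊆ Finset.Icc 1 12)
    (h : maisOn Gedge S < alphaOn Gu S) :
    (∀ a ∈ S, ∀ b ∈ S, ¬ Gu.Adj a b) ∧ cliqueCoverOn Gu S = S.card :=
  mais_lt_alpha_implies_independent_general S h
end

section
/- There exists a valid index code of length ℓ = 7 with locality 1 and message length m = 1 over the alphabet A = Z/2Z for the three-receiver unicast problem B* (i.e., B*_S with S = {1,…,12}). Concretely, the encoder transmitting the seven symbols x_1+x_5+x_9, x_2+x_6, x_3+x_{10}, x_7+x_{11}, x_4, x_8, x_{12} admits, for each receiver i ∈ {1,2,3}, a set R_i of 4 codeword coordinates and a decoder recovering (x_j : j ∈ W_i) from (c_k : k ∈ R_i) and (x_j : j ∈ K_i). -/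
/-- A valid index code of length `ℓ` with locality `1` and message length `m`, over the
alphabet `A`, for the three-receiver unicast problem `B*_S` determined by the message subset
`S ⊆ {1, …, 12}`.  The messages are `x j ∈ A ^ m` for `j ∈ S`.  It consists of an encoder
`enc`, and for each receiver `i ∈ {1, 2, 3}` a set `R i` of at most `m * |Wᵢ ∩ S|` codeword
coordinates together with a decoder `dec i` which recovers the demanded messages
`(x j : j ∈ Wᵢ ∩ S)` from the observed codeword symbols `(enc x k : k ∈ R i)` and the side
information `(x j : j ∈ Kᵢ ∩ S)`. -/
structure ValidIndexCode (A : Type*) [Fintype A] (m ℓ : ℕ) (S : Finset ℕ) where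
  enc : ({j : ℕ // j ∈ S} → Fin m → A) → Fin ℓ → A
  R : Fin 3 → Finset (Fin ℓ)
  locality : ∀ i : Fin 3, (R i).card ≤ m * (Wset i ∩ S).card
  dec : ∀ i : Fin 3, ({k : Fin ℓ // k ∈ R i} → A) →
    ({j : ℕ // j ∈ Kset i ∩ S} → Fin m → A) → ({j : ℕ // j ∈ Wset i ∩ S} → Fin m → A)
  correct : ∀ (x : {j : ℕ // j ∈ S} → Fin m → A) (i : Fin 3)
      (j : {j : ℕ // j ∈ Wset i ∩ S}),
    dec i (fun k => enc x k.1) (fun j' => x ⟨j'.1, (Finset.mem_inter.mp j'.2).2⟩) j =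
      x ⟨j.1, (Finset.mem_inter.mp j.2).2⟩

/-! Each receiver observes four codeword symbols, and each of them is one of its four wanted
messages plus messages it already knows; subtracting the known part decodes that message. -/

namespace ValidIndexCode

variable {A : Type*} [Fintype A] [AddCommGroup A] {ℓ : ℕ} {S : Finset ℕ}

def ofPivots (enc : ({j : ℕ // j ∈ S} → Fin 1 → A) → Fin ℓ → A) (R : Fin 3 → Finset (Fin ℓ))
    (locality : ∀ i, (R i).card ≤ 1 * (Wset i ∩ S).card)
    (pivot : Fin 3 → ℕ → Fin ℓ) (pivot_mem : ∀ i, ∀ j ∈ Wset i ∩ S, pivot i j ∈ R i)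
    (offset : ∀ i : Fin 3, ℕ → ({j : ℕ // j ∈ Kset i ∩ S} → Fin 1 → A) → A)
    (enc_pivot : ∀ x i (j : {j : ℕ // j ∈ Wset i ∩ S}),
      enc x (pivot i j) = x ⟨j, (Finset.mem_inter.mp j.2).2⟩ 0 +
        offset i j (fun j' => x ⟨j'.1, (Finset.mem_inter.mp j'.2).2⟩)) :
    ValidIndexCode A 1 ℓ S where
  enc := enc
  R := R
  locality := locality
  dec i obs side j _ := obs ⟨pivot i j, pivot_mem i j j.2⟩ - offset i j side
  correct x i j := by
    funext t
    dsimp only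
    rw [Subsingleton.elim t 0, enc_pivot, add_sub_cancel_right]

end ValidIndexCode

namespace Bstar

variable (A : Type*) [AddCommGroup A]

def enc (x : {j : ℕ // j ∈ Finset.Icc 1 12} → Fin 1 → A) : Fin 7 → A :=
  ![x ⟨1, by decide⟩ 0 + x ⟨5, by decide⟩ 0 + x ⟨9, by decide⟩ 0,
    x ⟨2, by decide⟩ 0 + x ⟨6, by decide⟩ 0,
    x ⟨3, by decide⟩ 0 + x ⟨10, by decide⟩ 0,
    x ⟨7, by decide⟩ 0 + x ⟨11, by decide⟩ 0,
    x ⟨4, by decide⟩ 0,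
    x ⟨8, by decide⟩ 0,
    x ⟨12, by decide⟩ 0]

def R : Fin 3 → Finset (Fin 7) := ![{0, 1, 2, 4}, {0, 1, 3, 5}, {0, 2, 3, 6}]

def pivot : Fin 3 → ℕ → Fin 7
  | 0, 1 => 0 | 0, 2 => 1 | 0, 3 => 2 | 0, _ => 4
  | 1, 5 => 0 | 1, 6 => 1 | 1, 7 => 3 | 1, _ => 5
  | 2, 9 => 0 | 2, 10 => 2 | 2, 11 => 3 | 2, _ => 6

def offset : ∀ i : Fin 3, ℕ → ({j : ℕ // j ∈ Kset i ∩ Finset.Icc 1 12} → Fin 1 → A) → A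
  | 0, 1, y => y ⟨5, by decide⟩ 0 + y ⟨9, by decide⟩ 0
  | 0, 2, y => y ⟨6, by decide⟩ 0
  | 0, 3, y => y ⟨10, by decide⟩ 0
  | 1, 5, y => y ⟨1, by decide⟩ 0 + y ⟨9, by decide⟩ 0
  | 1, 6, y => y ⟨2, by decide⟩ 0
  | 1, 7, y => y ⟨11, by decide⟩ 0
  | 2, 9, y => y ⟨1, by decide⟩ 0 + y ⟨5, by decide⟩ 0
  | 2, 10, y => y ⟨3, by decide⟩ 0
  | 2, 11, y => y ⟨7, by decide⟩ 0
  | _, _, _ => 0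

theorem enc_pivot (x : {j : ℕ // j ∈ Finset.Icc 1 12} → Fin 1 → A) (i : Fin 3)
    (j : {j : ℕ // j ∈ Wset i ∩ Finset.Icc 1 12}) :
    enc A x (pivot i j) = x ⟨j, (Finset.mem_inter.mp j.2).2⟩ 0 +
      offset A i j (fun j' => x ⟨j'.1, (Finset.mem_inter.mp j'.2).2⟩) := by
  obtain ⟨j, hj⟩ := j
  fin_cases i <;> fin_cases hj <;> simp [enc, pivot, offset] <;> abel

def code [Fintype A] : ValidIndexCode A 1 7 (Finset.Icc 1 12) :=
  .ofPivots (enc A) R (by decide) pivot (by decide) (offset A) (enc_pivot A)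

end Bstar

/-- There is a valid index code of length `7` with locality `1` and message length `m = 1`
over `ZMod 2` for the problem `B*` whose seven transmitted symbols are
`x₁+x₅+x₉, x₂+x₆, x₃+x₁₀, x₇+x₁₁, x₄, x₈, x₁₂`, and each receiver observes a set of `4`
codeword coordinates. -/
theorem exists_optimal_code_for_Bstar :
    ∃ code : ValidIndexCode (ZMod 2) 1 7 (Finset.Icc 1 12),
      (∀ i : Fin 3, (code.R i).card = 4) ∧
      ∀ x : {j : ℕ // j ∈ Finset.Icc 1 12} → Fin 1 → ZMod 2,
        code.enc x 0 = x ⟨1, by decide⟩ 0 + x ⟨5, by decide⟩ 0 + x ⟨9, by decide⟩ 0 ∧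
        code.enc x 1 = x ⟨2, by decide⟩ 0 + x ⟨6, by decide⟩ 0 ∧
        code.enc x 2 = x ⟨3, by decide⟩ 0 + x ⟨10, by decide⟩ 0 ∧
        code.enc x 3 = x ⟨7, by decide⟩ 0 + x ⟨11, by decide⟩ 0 ∧
        code.enc x 4 = x ⟨4, by decide⟩ 0 ∧
        code.enc x 5 = x ⟨8, by decide⟩ 0 ∧
        code.enc x 6 = x ⟨12, by decide⟩ 0 :=
  ⟨Bstar.code (ZMod 2), by decide, fun _ => ⟨rfl, rfl, rfl, rfl, rfl, rfl, rfl⟩⟩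
end
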